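/- arXiv:2005.00665 — 2 statements merged into one kernel-verified Lean document; each statement's English description precedes it below -/
import Mathlib

section
/- Let n₁ and n₂ be relatively prime positive integers and let α ∈ [0,1] be real. Then there exist an integer j₀ and sequences (N_{1,j})_{j≥j₀}, (N_{2,j})_{j≥j₀} of positive integers such that n₁·N_{1,j} + n₂·N_{2,j} = j for every j ≥ j₀, both N_{1,j} → ∞ and N_{2,j} → ∞ as j → ∞, and the ratio n₁·N_{1,j}/(n₁·N_{1,j} + n₂·N_{2,j}) converges to α as j → ∞. -/
open Complex Set Filter Topology

noncomputable section

/-- The quadratic polynomial `f_c(z) = z² + c`. -/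
def fc (c z : ℂ) : ℂ := z ^ 2 + c

/-- The `n`-th iterate of `f_c`. -/
def fIter (c : ℂ) (n : ℕ) : ℂ → ℂ := (fc c)^[n]

/-- The multiplier: the derivative of the `n`-th iterate of `f_c` at `z`. -/
def multiplier (c : ℂ) (n : ℕ) (z : ℂ) : ℂ := deriv (fIter c n) z

/-- `z` is a periodic point of exact period `n ≥ 1` of `f_c`. -/
def ExactPeriodic (c : ℂ) (n : ℕ) (z : ℂ) : Prop :=
  1 ≤ n ∧ fIter c n z = z ∧ ∀ m, 1 ≤ m → m < n → fIter c m z ≠ z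

/-- The forward orbit of `z` under `f_c`. -/
def orbitOf (c z : ℂ) : Set ℂ := Set.range fun k => fIter c k z

/-- `ρ` is a local multiplier function on `U` of the periodic orbit of the periodic
point `z₀` (of exact period `n`) of `f_{c₀}`. -/
def IsLocalMultiplier (c₀ : ℂ) (n : ℕ) (z₀ : ℂ) (U : Set ℂ) (ρ : ℂ → ℂ) : Prop :=
  IsOpen U ∧ IsConnected U ∧ c₀ ∈ U ∧
    ∃ p : ℂ → ℂ, AnalyticOnNhd ℂ p U ∧ p c₀ ∈ orbitOf c₀ z₀ ∧
      (∀ c ∈ U, ExactPeriodic c n (p c)) ∧ ∀ c ∈ U, ρ c = multiplier c n (p c)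

/-- `ν` is a ν-function on `U` of the periodic orbit of `z₀`. -/
def IsNuFunction (c₀ : ℂ) (n : ℕ) (z₀ : ℂ) (U : Set ℂ) (ν : ℂ → ℂ) : Prop :=
  ∃ ρ : ℂ → ℂ, IsLocalMultiplier c₀ n z₀ U ρ ∧ (∀ c ∈ U, ρ c ≠ 0) ∧
    ∀ c ∈ U, ν c = deriv ρ c / (n * ρ c)

/-- `X_n`: the set of critical points of period-`n` multipliers. -/
def Xn (n : ℕ) : Set ℂ :=
  {c₀ | ∃ (z₀ : ℂ) (U : Set ℂ) (ρ : ℂ → ℂ),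
    ExactPeriodic c₀ n z₀ ∧ IsLocalMultiplier c₀ n z₀ U ρ ∧ deriv ρ c₀ = 0}

/-- The accumulation set `X` of critical points of multipliers. -/
def Xacc : Set ℂ :=
  ⋂ k ∈ {k : ℕ | 1 ≤ k}, closure (⋃ n ∈ {n : ℕ | k ≤ n}, Xn n)

/-- The Mandelbrot set. -/
def Mset : Set ℂ := {c | Bornology.IsBounded (Set.range fun n => fIter c n 0)}

/-- The set `Y_c`. -/
def Yset (c : ℂ) : Set ℂ :=
  closure {w | ∃ (n : ℕ) (z : ℂ) (U : Set ℂ) (ν : ℂ → ℂ),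
    ExactPeriodic c n z ∧ 1 < ‖multiplier c n z‖ ∧
    IsNuFunction c n z U ν ∧ ν c = w}

/-- The filled Julia set of `f_c`. -/
def filledJulia (c : ℂ) : Set ℂ :=
  {z | Bornology.IsBounded (Set.range fun n => fIter c n z)}

/-- The Julia set of `f_c`. -/
def juliaSet (c : ℂ) : Set ℂ := frontier (filledJulia c)

/-!
Aim `n₁ N₁ⱼ` at the target `βⱼ = α (j - √j) + (1 - α) √j`, for which `βⱼ` and `j - βⱼ` both tend
to infinity while `βⱼ / j → α`. Since `n₁` is invertible modulo `n₂`, every window of `n₂`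
consecutive values of `N₁` contains one with `n₁ N₁ ≡ j (mod n₂)`; taking the window just above
`βⱼ / n₁` gives `βⱼ ≤ n₁ N₁ⱼ ≤ βⱼ + n₁ n₂` with `j - n₁ N₁ⱼ = n₂ N₂ⱼ`, and the bounded error
disappears in all three limits.
-/

theorem ZMod.exists_mem_Ico_natCast_eq {n : ℕ} [NeZero n] (a : ZMod n) (m : ℕ) :
    ∃ k ∈ Ico m (m + n), (k : ZMod n) = a :=
  ⟨m + (a - m).val, ⟨le_self_add, by simpa using ZMod.val_lt (a - (m : ZMod n))⟩, by simp⟩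

theorem Nat.exists_mul_add_mul_eq_of_coprime {n₁ n₂ : ℕ} [NeZero n₂] (hcop : n₁.Coprime n₂)
    (m : ℕ) {j : ℕ} (hj : n₁ * (m + n₂) ≤ j) :
    ∃ N₁ N₂, N₁ ∈ Ico m (m + n₂) ∧ n₁ * N₁ + n₂ * N₂ = j := by
  obtain ⟨k, hk, hkj⟩ := ZMod.exists_mem_Ico_natCast_eq ((n₁ : ZMod n₂)⁻¹ * (j : ZMod n₂)) m
  have hle : n₁ * k ≤ j := (Nat.mul_le_mul_left _ hk.2.le).trans hj
  have hmod : n₁ * k ≡ j [MOD n₂] := by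
    rw [← ZMod.natCast_eq_natCast_iff]
    push_cast
    rw [hkj, ← mul_assoc, ZMod.coe_mul_inv_eq_one _ hcop, one_mul]
  obtain ⟨N₂, hN₂⟩ := (Nat.modEq_iff_dvd' hle).mp hmod
  exact ⟨k, N₂, hk, by omega⟩

theorem Nat.exists_mul_add_mul_eq_and_mul_mem_Icc {n₁ n₂ : ℕ} [NeZero n₂] (h₁ : 0 < n₁)
    (hcop : n₁.Coprime n₂) {j : ℕ} {β : ℝ} (hβ : 0 ≤ β) (hj : β + n₁ * (n₂ + 1) ≤ j) :
    ∃ N₁ N₂ : ℕ, n₁ * N₁ + n₂ * N₂ = j ∧ (n₁ * N₁ : ℝ) ∈ Icc β (β + n₁ * n₂) := by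
  have hn₁ : (0 : ℝ) < n₁ := by exact_mod_cast h₁
  set m := ⌈β / n₁⌉₊
  have hβm : β ≤ n₁ * m := (div_le_iff₀' hn₁).mp (Nat.le_ceil _)
  have hmβ : (n₁ * m : ℝ) < β + n₁ := by
    have := Nat.ceil_lt_add_one (div_nonneg hβ hn₁.le)
    rw [← sub_lt_iff_lt_add, lt_div_iff₀' hn₁] at this
    linarith
  have hmj : n₁ * (m + n₂) ≤ j := by
    have : (n₁ * (m + n₂) : ℝ) ≤ j := by linarith
    exact_mod_cast this
  obtain ⟨N₁, N₂, ⟨hmN, hNm⟩, hsum⟩ := Nat.exists_mul_add_mul_eq_of_coprime hcop m hmj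
  have hmN' : (m : ℝ) ≤ N₁ := by exact_mod_cast hmN
  have hNm' : (N₁ + 1 : ℝ) ≤ m + n₂ := by exact_mod_cast hNm
  exact ⟨N₁, N₂, hsum, by nlinarith, by nlinarith⟩

theorem Filter.Tendsto.convex_comb_atTop {ι : Type*} {l : Filter ι} {f g : ι → ℝ} {a : ℝ}
    (ha : a ∈ Icc (0 : ℝ) 1) (hf : Tendsto f l atTop) (hg : Tendsto g l atTop) :
    Tendsto (fun i => a * f i + (1 - a) * g i) l atTop :=
  tendsto_atTop.2 fun b => ((hf.eventually_ge_atTop b).and (hg.eventually_ge_atTop b)).mono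
    fun _ ⟨hfb, hgb⟩ => by nlinarith [ha.1, ha.2]

theorem exists_seq_div_natCast_tendsto_of_mem_Icc {α : ℝ} (hα : α ∈ Icc (0 : ℝ) 1) :
    ∃ β : ℕ → ℝ, Tendsto β atTop atTop ∧ Tendsto (fun j => j - β j) atTop atTop ∧
      Tendsto (fun j => β j / j) atTop (𝓝 α) := by
  have hs : Tendsto (fun j : ℕ => √(j : ℝ)) atTop atTop :=
    Real.tendsto_sqrt_atTop.comp tendsto_natCast_atTop_atTop
  have hs₀ : Tendsto (fun j : ℕ => √(j : ℝ) / j) atTop (𝓝 0) := by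
    simp_rw [Real.sqrt_div_self', one_div]
    exact tendsto_inv_atTop_zero.comp hs
  have hd : Tendsto (fun j : ℕ => (j : ℝ) - √j) atTop atTop := by
    refine (hs.atTop_mul_atTop₀ (tendsto_atTop_add_const_right _ (-1) hs)).congr fun j => ?_
    rw [mul_add, Real.mul_self_sqrt (Nat.cast_nonneg j)]
    ring
  have hα' : 1 - α ∈ Icc (0 : ℝ) 1 := ⟨by linarith [hα.2], by linarith [hα.1]⟩
  refine ⟨fun j => α * (j - √j) + (1 - α) * √j, hd.convex_comb_atTop hα hs,
    (hd.convex_comb_atTop hα' hs).congr fun j => by ring, ?_⟩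
  have hlim : Tendsto (fun j : ℕ => α + (1 - 2 * α) * (√(j : ℝ) / j)) atTop (𝓝 α) := by
    simpa using tendsto_const_nhds.add (hs₀.const_mul (1 - 2 * α))
  refine hlim.congr' ((eventually_ne_atTop 0).mono fun j hj => ?_)
  field_simp
  ring

theorem tendsto_atTop_and_div_of_mem_Icc {α C : ℝ} {β x y : ℕ → ℝ}
    (hβ : Tendsto β atTop atTop) (hβ' : Tendsto (fun j => j - β j) atTop atTop)
    (hβα : Tendsto (fun j => β j / j) atTop (𝓝 α)) (hsum : ∀ᶠ j in atTop, x j + y j = j)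
    (hx : ∀ᶠ j in atTop, x j ∈ Icc (β j) (β j + C)) :
    Tendsto x atTop atTop ∧ Tendsto y atTop atTop ∧
      Tendsto (fun j => x j / (x j + y j)) atTop (𝓝 α) := by
  refine ⟨tendsto_atTop_mono' _ (hx.mono fun _ h => h.1) hβ, ?_, ?_⟩
  · refine tendsto_atTop_mono' _ ?_ (tendsto_atTop_add_const_right _ (-C) hβ')
    filter_upwards [hsum, hx] with j hj hj'
    linarith [hj'.2]
  · have hhi' : Tendsto (fun j : ℕ => β j / j + C / j) atTop (𝓝 α) := by
      simpa using hβα.add (tendsto_const_div_atTop_nhds_zero_nat C)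
    have hxj : Tendsto (fun j : ℕ => x j / j) atTop (𝓝 α) := by
      refine tendsto_of_tendsto_of_tendsto_of_le_of_le' hβα hhi' ?_ ?_
      · filter_upwards [hx] with j hj
        gcongr
        exact hj.1
      · filter_upwards [hx] with j hj
        rw [← add_div]
        gcongr
        exact hj.2
    exact hxj.congr' (hsum.mono fun j hj => by simp only [hj])

/-- For coprime positive integers `n₁, n₂` and `α ∈ [0,1]`, every sufficiently large `j`
can be written as `j = n₁·N₁ⱼ + n₂·N₂ⱼ` with positive integers `N₁ⱼ, N₂ⱼ → ∞` such that
`n₁·N₁ⱼ/(n₁·N₁ⱼ + n₂·N₂ⱼ) → α`. -/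
theorem stmt15 (n₁ n₂ : ℕ) (h₁ : 0 < n₁) (h₂ : 0 < n₂) (hcop : Nat.Coprime n₁ n₂)
    (α : ℝ) (hα : α ∈ Set.Icc (0 : ℝ) 1) :
    ∃ (j₀ : ℕ) (N₁ N₂ : ℕ → ℕ),
      (∀ j, j₀ ≤ j → 0 < N₁ j ∧ 0 < N₂ j ∧ n₁ * N₁ j + n₂ * N₂ j = j) ∧
      Tendsto N₁ atTop atTop ∧ Tendsto N₂ atTop atTop ∧
      Tendsto (fun j => (n₁ * N₁ j : ℝ) / ((n₁ * N₁ j : ℝ) + (n₂ * N₂ j : ℝ)))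
        atTop (𝓝 α) := by
  have : NeZero n₂ := ⟨h₂.ne'⟩
  obtain ⟨β, hβ, hβ', hβα⟩ := exists_seq_div_natCast_tendsto_of_mem_Icc hα
  have hrep : ∀ᶠ j in atTop, ∃ N : ℕ × ℕ,
      n₁ * N.1 + n₂ * N.2 = j ∧ (n₁ * N.1 : ℝ) ∈ Icc (β j) (β j + n₁ * n₂) := by
    filter_upwards [hβ.eventually_ge_atTop 0, hβ'.eventually_ge_atTop (n₁ * (n₂ + 1))]
      with j hj₀ hj
    obtain ⟨N₁, N₂, h⟩ := Nat.exists_mul_add_mul_eq_and_mul_mem_Icc h₁ hcop hj₀ (by linarith)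
    exact ⟨(N₁, N₂), h⟩
  obtain ⟨N, hN⟩ := hrep.choice
  have hsum : ∀ᶠ j in atTop, n₁ * (N j).1 + n₂ * (N j).2 = j := hN.mono fun _ h => h.1
  obtain ⟨hx, hy, hratio⟩ := tendsto_atTop_and_div_of_mem_Icc
    (x := fun j => (n₁ * (N j).1 : ℝ)) (y := fun j => (n₂ * (N j).2 : ℝ)) hβ hβ' hβα
    (hsum.mono fun _ h => by exact_mod_cast h) (hN.mono fun _ h => h.2)
  have hN₁ : Tendsto (fun j => (N j).1) atTop atTop :=
    tendsto_natCast_atTop_iff.mp ((tendsto_const_mul_atTop_of_pos (by positivity)).mp hx)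
  have hN₂ : Tendsto (fun j => (N j).2) atTop atTop :=
    tendsto_natCast_atTop_iff.mp ((tendsto_const_mul_atTop_of_pos (by positivity)).mp hy)
  obtain ⟨j₀, hj₀⟩ := eventually_atTop.mp
    ((hN₁.eventually_gt_atTop 0).and ((hN₂.eventually_gt_atTop 0).and hsum))
  exact ⟨j₀, fun j => (N j).1, fun j => (N j).2, hj₀, hN₁, hN₂, hratio⟩
end
end

section
/- There exists R > 0 such that for every c ∈ ℂ with |c| > R and every periodic point z of f_c of exact period n ≥ 1, the multiplier ρ = (f_c^{∘n})'(z) satisfies (2√|c| − 2)^n < |ρ| < (2√|c| + 2)^n. -/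
open Complex Set Filter Topology

noncomputable section

/-!
Write `s = √|c|`. Since `|f_c(w)| ≥ | |w|² - s² |`, a point with `|w| ≥ s + 1` has
`|f_c(w)| ≥ |w| + s` and escapes to infinity, while for `s ≥ 2` a point with `|w| ≤ s - 1` is
mapped to `|f_c(w)| ≥ 2s - 1 ≥ s + 1`. So every periodic orbit lies in the annulus
`s - 1 < |w| < s + 1`, and by the chain rule the multiplier is `∏ₖ 2 f_c^k(z)`, a product of
`n` factors of modulus in `(2s - 2, 2s + 2)`.
-/

open Function

theorem deriv_iterate_eq_prod {𝕜 : Type*} [NontriviallyNormedField 𝕜] {f : 𝕜 → 𝕜}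
    (hf : Differentiable 𝕜 f) (n : ℕ) (x : 𝕜) :
    deriv f^[n] x = ∏ k ∈ Finset.range n, deriv f (f^[k] x) := by
  induction n with
  | zero => simp
  | succ n ih =>
    rw [iterate_succ', deriv_comp x hf.differentiableAt (hf.iterate n).differentiableAt,
      Finset.prod_range_succ, ih, mul_comm]

theorem deriv_fc (c z : ℂ) : deriv (fc c) z = 2 * z := by
  unfold fc
  simp

theorem differentiable_fc (c : ℂ) : Differentiable ℂ (fc c) := by
  unfold fc
  fun_prop

theorem multiplier_eq_prod (c : ℂ) (n : ℕ) (z : ℂ) :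
    multiplier c n z = ∏ k ∈ Finset.range n, 2 * (fc c)^[k] z := by
  simp only [multiplier, fIter, deriv_iterate_eq_prod (differentiable_fc c), deriv_fc]

theorem abs_norm_sq_sub_norm_le_norm_fc (c w : ℂ) : |‖w‖ ^ 2 - ‖c‖| ≤ ‖fc c w‖ := by
  have h := abs_norm_sub_norm_le (w ^ 2) (-c)
  rwa [norm_pow, norm_neg, sub_neg_eq_add] at h

theorem norm_add_sqrt_le_norm_fc {c w : ℂ} (hw : √‖c‖ + 1 ≤ ‖w‖) :
    ‖w‖ + √‖c‖ ≤ ‖fc c w‖ := by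
  have hs : √‖c‖ ^ 2 = ‖c‖ := Real.sq_sqrt (norm_nonneg c)
  have hf := (le_abs_self _).trans (abs_norm_sq_sub_norm_le_norm_fc c w)
  nlinarith [Real.sqrt_nonneg ‖c‖]

theorem norm_add_mul_sqrt_le_norm_iterate_fc {c w : ℂ} (hw : √‖c‖ + 1 ≤ ‖w‖) (k : ℕ) :
    ‖w‖ + k * √‖c‖ ≤ ‖(fc c)^[k] w‖ := by
  induction k with
  | zero => simp
  | succ k ih =>
    rw [iterate_succ_apply']
    have hk : √‖c‖ + 1 ≤ ‖(fc c)^[k] w‖ := by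
      nlinarith [Real.sqrt_nonneg ‖c‖, k.cast_nonneg (α := ℝ)]
    push_cast
    linarith [norm_add_sqrt_le_norm_fc hk]

theorem norm_lt_sqrt_add_one_of_isPeriodicPt {c w : ℂ} (hc : c ≠ 0) {n : ℕ} (hn : 0 < n)
    (hw : IsPeriodicPt (fc c) n w) : ‖w‖ < √‖c‖ + 1 := by
  by_contra! h
  have hescape := norm_add_mul_sqrt_le_norm_iterate_fc h n
  rw [hw.eq] at hescape
  have : 0 < (n : ℝ) * √‖c‖ := by positivity
  linarith

theorem sqrt_sub_one_lt_norm_of_isPeriodicPt {c w : ℂ} (hc : 2 ≤ √‖c‖) {n : ℕ} (hn : 0 < n)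
    (hw : IsPeriodicPt (fc c) n w) : √‖c‖ - 1 < ‖w‖ := by
  have hc0 : c ≠ 0 := norm_pos_iff.mp (Real.sqrt_pos.mp (by linarith))
  by_contra! h
  have hs : √‖c‖ ^ 2 = ‖c‖ := Real.sq_sqrt (norm_nonneg c)
  have hf := (neg_le_abs _).trans (abs_norm_sq_sub_norm_le_norm_fc c w)
  have himage := norm_lt_sqrt_add_one_of_isPeriodicPt hc0 hn hw.apply
  nlinarith [norm_nonneg w]

/-- For `|c|` large enough, the multiplier `ρ` of every periodic orbit of exact period
`n` of `f_c` satisfies `(2√|c| - 2)^n < |ρ| < (2√|c| + 2)^n`. -/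
theorem stmt16 :
    ∃ R : ℝ, 0 < R ∧ ∀ c : ℂ, R < ‖c‖ → ∀ (n : ℕ) (z : ℂ),
      ExactPeriodic c n z →
        (2 * Real.sqrt (‖c‖) - 2) ^ n < ‖multiplier c n z‖ ∧
        ‖multiplier c n z‖ < (2 * Real.sqrt (‖c‖) + 2) ^ n := by
  refine ⟨4, by norm_num, fun c hc n z ⟨hn, hz, _⟩ => ?_⟩
  have hs : 2 < √‖c‖ := (Real.lt_sqrt zero_le_two).mpr (by linarith)
  have hc0 : c ≠ 0 := norm_pos_iff.mp (by linarith)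
  have hper : IsPeriodicPt (fc c) n z := hz
  have horbit (k : ℕ) :
      2 * √‖c‖ - 2 < ‖2 * (fc c)^[k] z‖ ∧ ‖2 * (fc c)^[k] z‖ < 2 * √‖c‖ + 2 := by
    have hlow := sqrt_sub_one_lt_norm_of_isPeriodicPt hs.le hn (hper.apply_iterate k)
    have hup := norm_lt_sqrt_add_one_of_isPeriodicPt hc0 hn (hper.apply_iterate k)
    rw [norm_mul, Complex.norm_two]
    constructor <;> linarith
  have hne : (Finset.range n).Nonempty := Finset.nonempty_range_iff.mpr (by omega)
  rw [multiplier_eq_prod, norm_prod]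
  constructor
  · simpa using Finset.prod_lt_prod_of_nonempty (fun _ _ => by linarith)
      (fun k _ => (horbit k).1) hne
  · simpa using Finset.prod_lt_prod_of_nonempty (fun k _ => by linarith [(horbit k).1])
      (fun k _ => (horbit k).2) hne
end
end
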